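/- arXiv:0706.0946 — 5 statements merged into one kernel-verified Lean document; each statement's English description precedes it below -/
import Mathlib

section
/- Let γ : ℝ → ℝ³ be a C^∞ curve parametrized by arclength (‖γ'(t)‖ = 1 for all t) with no inflection points (γ''(t) ≠ 0 for all t). Define κ(t) = ‖γ''(t)‖, the unit principal normal n(t) = γ''(t)/κ(t), the unit binormal b(t) = γ'(t) × n(t), the torsion τ(t) = det(γ'(t), γ''(t), γ'''(t))/κ(t)², and the normalized Darboux vector field D(t) = (τ(t)/κ(t))·γ'(t) + b(t). Then for all t: γ'(t) × D(t) ≠ 0, the derivative D'(t) is a scalar multiple of γ'(t) (so D'(t) × γ'(t) = 0 and det(γ'(t), D(t), D'(t)) = 0), and D'(t)·γ''(t) = 0. Hence F_{γ,D} is a rectifying developable strip. -/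
open Real

noncomputable abbrev E3 := EuclideanSpace ℝ (Fin 3)

/-- The cross product of vectors in Euclidean 3-space. -/
noncomputable def cross3 (u v : E3) : E3 :=
  (WithLp.equiv 2 (Fin 3 → ℝ)).symm
    ![u 1 * v 2 - u 2 * v 1, u 2 * v 0 - u 0 * v 2, u 0 * v 1 - u 1 * v 0]

/-- The dot product of vectors in Euclidean 3-space. -/
noncomputable def dot3 (u v : E3) : ℝ := u 0 * v 0 + u 1 * v 1 + u 2 * v 2

/-- The determinant of the 3×3 matrix with columns `u`, `v`, `w`. -/
noncomputable def det3 (u v w : E3) : ℝ := dot3 u (cross3 v w)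
/-- The curvature of a unit-speed curve. -/
noncomputable def curv (γ : ℝ → E3) (t : ℝ) : ℝ := ‖deriv (deriv γ) t‖

/-- The unit principal normal of a unit-speed curve. -/
noncomputable def pnormal (γ : ℝ → E3) (t : ℝ) : E3 :=
  (curv γ t)⁻¹ • deriv (deriv γ) t

/-- The unit binormal of a unit-speed curve. -/
noncomputable def binormal (γ : ℝ → E3) (t : ℝ) : E3 :=
  cross3 (deriv γ t) (pnormal γ t)

/-- The torsion of a unit-speed curve. -/
noncomputable def tors (γ : ℝ → E3) (t : ℝ) : ℝ :=
  det3 (deriv γ t) (deriv (deriv γ) t) (deriv (deriv (deriv γ)) t) / (curv γ t) ^ 2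

/-- The normalized Darboux vector field of a unit-speed curve. -/
noncomputable def darboux (γ : ℝ → E3) (t : ℝ) : E3 :=
  (tors γ t / curv γ t) • deriv γ t + binormal γ t

set_option maxHeartbeats 1000000

lemma hasDerivAt_coord {f : ℝ → E3} {f' : E3} {t : ℝ} (h : HasDerivAt f f' t) (i : Fin 3) :
    HasDerivAt (fun s => f s i) (f' i) t :=
  ((ContinuousLinearMap.proj i).comp
      (PiLp.continuousLinearEquiv 2 ℝ (fun _ : Fin 3 => ℝ)).toContinuousLinearMap).hasFDerivAt.comp_hasDerivAt t h

lemma hasDerivAt_of_coords {f : ℝ → E3} {v : E3} {t : ℝ}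
    (h : ∀ i, HasDerivAt (fun s => f s i) (v i) t) : HasDerivAt f v t :=
  ((PiLp.continuousLinearEquiv 2 ℝ (fun _ : Fin 3 => ℝ)).symm.toContinuousLinearMap).hasFDerivAt.comp_hasDerivAt
    t (hasDerivAt_pi.2 h)

lemma cross3_coords {u v : E3} (i : Fin 3) :
    cross3 u v i = ![u 1 * v 2 - u 2 * v 1, u 2 * v 0 - u 0 * v 2, u 0 * v 1 - u 1 * v 0] i := rfl

lemma HasDerivAt.cross3' {f g : ℝ → E3} {f' g' : E3} {t : ℝ}
    (hf : HasDerivAt f f' t) (hg : HasDerivAt g g' t) :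
    HasDerivAt (fun s => cross3 (f s) (g s)) (cross3 f' (g t) + cross3 (f t) g') t := by
  apply hasDerivAt_of_coords
  intro i
  have h := fun i => hasDerivAt_coord hf i
  have h2 := fun i => hasDerivAt_coord hg i
  have key : ∀ (a b c d : Fin 3), HasDerivAt (fun s => f s a * g s b - f s c * g s d)
      ((f' a * g t b - f' c * g t d) + (f t a * g' b - f t c * g' d)) t := by
    intro a b c d
    exact (((h a).mul (h2 b)).sub ((h c).mul (h2 d))).congr_deriv (by ring)
  fin_cases i <;>
    simp only [cross3, PiLp.toLp_apply, PiLp.add_apply, Fin.isValue, Fin.zero_eta,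
      Fin.mk_one, show (⟨2,by norm_num⟩ : Fin 3) = 2 from rfl,
      Matrix.cons_val_zero, Matrix.cons_val_one, Matrix.head_cons,
      Matrix.cons_val_two, Matrix.tail_cons]
  · exact key 1 2 2 1
  · exact key 2 0 0 2
  · exact key 0 1 1 0

lemma HasDerivAt.dot3' {f g : ℝ → E3} {f' g' : E3} {t : ℝ}
    (hf : HasDerivAt f f' t) (hg : HasDerivAt g g' t) :
    HasDerivAt (fun s => dot3 (f s) (g s)) (dot3 f' (g t) + dot3 (f t) g') t := by
  have h := fun i => hasDerivAt_coord hf i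
  have h2 := fun i => hasDerivAt_coord hg i
  have := (((h 0).mul (h2 0)).add ((h 1).mul (h2 1))).add ((h 2).mul (h2 2))
  simp only [dot3]
  exact this.congr_deriv (by ring)

lemma dot3_self_eq (u : E3) : dot3 u u = ‖u‖ ^ 2 := by
  have : ‖u‖ = Real.sqrt (∑ i, u i ^ 2) := by
    rw [EuclideanSpace.norm_eq]; congr 1; apply Finset.sum_congr rfl; intros; rw [Real.norm_eq_abs, sq_abs]
  rw [this, Real.sq_sqrt (by positivity)]
  simp [dot3, Fin.sum_univ_three]; ring

lemma cross3_self (u : E3) : cross3 u u = 0 := by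
  ext i; fin_cases i <;> simp [cross3_coords] <;> ring

lemma cross3_smul_right (c : ℝ) (u v : E3) : cross3 u (c • v) = c • cross3 u v := by
  ext i; fin_cases i <;>
    simp [cross3_coords, PiLp.smul_apply, smul_eq_mul] <;> ring

lemma dot3_comm (u v : E3) : dot3 u v = dot3 v u := by simp [dot3]; ring

lemma dot3_smul_left (c : ℝ) (u v : E3) : dot3 (c • u) v = c * dot3 u v := by
  simp [dot3, PiLp.smul_apply, smul_eq_mul]; ring

lemma dot3_cross_right_self (u v : E3) : dot3 u (cross3 v u) = 0 := by
  simp [dot3, cross3_coords]; ring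

lemma cross3_cross3_self (u v : E3) :
    cross3 u (cross3 u v) = dot3 u v • u - dot3 u u • v := by
  ext i; fin_cases i <;>
    simp [cross3_coords, dot3, PiLp.sub_apply, PiLp.smul_apply, smul_eq_mul] <;> ring

lemma key_identity (u v w : E3) (h : dot3 u v = 0) :
    (dot3 u (cross3 v w)) • v - (dot3 v w) • cross3 u v + (dot3 v v) • cross3 u w = 0 := by
  simp only [dot3, cross3_coords] at h ⊢
  ext i; fin_cases i <;>
    simp [cross3_coords, dot3, PiLp.sub_apply, PiLp.add_apply, PiLp.smul_apply, smul_eq_mul,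
      PiLp.zero_apply]
  · linear_combination (v 1 * w 2 - v 2 * w 1) * h
  · linear_combination (v 2 * w 0 - v 0 * w 2) * h
  · linear_combination (v 0 * w 1 - v 1 * w 0) * h

lemma cross3_add_right (u v w : E3) : cross3 u (v + w) = cross3 u v + cross3 u w := by
  ext i; fin_cases i <;> simp [cross3_coords, PiLp.add_apply] <;> ring

lemma cross3_smul_left (c : ℝ) (u v : E3) : cross3 (c • u) v = c • cross3 u v := by
  ext i; fin_cases i <;> simp [cross3_coords, PiLp.smul_apply, smul_eq_mul] <;> ring

lemma dot3_smul_right (c : ℝ) (u v : E3) : dot3 u (c • v) = c * dot3 u v := by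
  simp [dot3, PiLp.smul_apply, smul_eq_mul]; ring

/-- The normalized Darboux vector field of a unit-speed curve without inflection
points yields a rectifying developable strip. -/
theorem darboux_gives_rectifying_developable (γ : ℝ → E3)
    (hγ : ContDiff ℝ (⊤ : ℕ∞) γ)
    (hunit : ∀ t, ‖deriv γ t‖ = 1)
    (hinf : ∀ t, deriv (deriv γ) t ≠ 0) :
    ∀ t, cross3 (deriv γ t) (darboux γ t) ≠ 0 ∧
      (∃ lam : ℝ, deriv (darboux γ) t = lam • deriv γ t) ∧
      cross3 (deriv (darboux γ) t) (deriv γ t) = 0 ∧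
      det3 (deriv γ t) (darboux γ t) (deriv (darboux γ) t) = 0 ∧
      dot3 (deriv (darboux γ) t) (deriv (deriv γ) t) = 0 := by
  have hγ' : ContDiff ℝ (↑(⊤:ℕ∞)) γ := hγ.of_le (by simp)
  have hT : ContDiff ℝ (↑(⊤:ℕ∞)) (deriv γ) := (contDiff_infty_iff_deriv.mp hγ').2
  have ha : ContDiff ℝ (↑(⊤:ℕ∞)) (deriv (deriv γ)) := (contDiff_infty_iff_deriv.mp hT).2
  have hj : ContDiff ℝ (↑(⊤:ℕ∞)) (deriv (deriv (deriv γ))) := (contDiff_infty_iff_deriv.mp ha).2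
  have hTd : ∀ s, HasDerivAt (deriv γ) (deriv (deriv γ) s) s :=
    fun s => ((hT.differentiable (by simp)) s).hasDerivAt
  have had : ∀ s, HasDerivAt (deriv (deriv γ)) (deriv (deriv (deriv γ)) s) s :=
    fun s => ((ha.differentiable (by simp)) s).hasDerivAt
  have hjd : ∀ s, HasDerivAt (deriv (deriv (deriv γ)))
      (deriv (deriv (deriv (deriv γ))) s) s :=
    fun s => ((hj.differentiable (by simp)) s).hasDerivAt
  have hdTT : ∀ s, dot3 (deriv γ s) (deriv γ s) = 1 := fun s => by
    rw [dot3_self_eq, hunit s]; norm_num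
  have hTa : ∀ s, dot3 (deriv γ s) (deriv (deriv γ) s) = 0 := by
    intro s
    have h1 := (hTd s).dot3' (hTd s)
    have hconst : (fun r => dot3 (deriv γ r) (deriv γ r)) = fun _ => (1:ℝ) := funext hdTT
    rw [hconst] at h1
    have h2 := h1.unique (hasDerivAt_const s 1)
    rw [dot3_comm (deriv (deriv γ) s)] at h2
    linarith
  have hκpos : ∀ s, (0:ℝ) < ‖deriv (deriv γ) s‖ := fun s => norm_pos_iff.mpr (hinf s)
  have hκd : ∀ s, HasDerivAt (fun r => ‖deriv (deriv γ) r‖)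
      (dot3 (deriv (deriv γ) s) (deriv (deriv (deriv γ)) s) / ‖deriv (deriv γ) s‖) s := by
    intro s
    have hg : HasDerivAt (fun r => dot3 (deriv (deriv γ) r) (deriv (deriv γ) r))
        (2 * dot3 (deriv (deriv γ) s) (deriv (deriv (deriv γ)) s)) s := by
      convert (had s).dot3' (had s) using 1
      rw [dot3_comm (deriv (deriv (deriv γ)) s)]; ring
    have hne : dot3 (deriv (deriv γ) s) (deriv (deriv γ) s) ≠ 0 := by
      rw [dot3_self_eq]
      exact pow_ne_zero 2 (ne_of_gt (hκpos s))
    have := hg.sqrt hne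
    have heq : (fun r => Real.sqrt (dot3 (deriv (deriv γ) r) (deriv (deriv γ) r)))
        = fun r => ‖deriv (deriv γ) r‖ := by
      funext r; rw [dot3_self_eq, Real.sqrt_sq (norm_nonneg _)]
    rw [heq] at this
    convert this using 1
    have hne' : ‖deriv (deriv γ) s‖ ≠ 0 := ne_of_gt (hκpos s)
    rw [dot3_self_eq, Real.sqrt_sq (norm_nonneg _)]
    field_simp
  -- rewrite darboux in workable form
  have hD : darboux γ = fun s =>
      (dot3 (deriv γ s) (cross3 (deriv (deriv γ) s) (deriv (deriv (deriv γ)) s))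
        / ‖deriv (deriv γ) s‖ ^ 3) • deriv γ s
      + (‖deriv (deriv γ) s‖)⁻¹ • cross3 (deriv γ s) (deriv (deriv γ) s) := by
    funext s
    have hne : ‖deriv (deriv γ) s‖ ≠ 0 := ne_of_gt (hκpos s)
    simp only [darboux, binormal, pnormal, tors, det3, curv]
    rw [cross3_smul_right]
    congr 1
    rw [div_div, ← pow_succ]
  intro t
  have hneT : ‖deriv (deriv γ) t‖ ≠ 0 := ne_of_gt (hκpos t)
  set T := deriv γ t with hT_def
  set A := deriv (deriv γ) t with hA_def
  set J := deriv (deriv (deriv γ)) t with hJ_def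
  obtain ⟨c, hf⟩ : ∃ c, HasDerivAt (fun s =>
      dot3 (deriv γ s) (cross3 (deriv (deriv γ) s) (deriv (deriv (deriv γ)) s))
        / ‖deriv (deriv γ) s‖ ^ 3) c t := by
    exact ⟨_, ((hTd t).dot3' ((had t).cross3' (hjd t))).div ((hκd t).pow 3)
      (pow_ne_zero 3 hneT)⟩
  have hinv : HasDerivAt (fun r => (‖deriv (deriv γ) r‖)⁻¹)
      (-(dot3 A J / ‖A‖) / ‖A‖ ^ 2) t := (hκd t).inv hneT
  have hcr : HasDerivAt (fun r => cross3 (deriv γ r) (deriv (deriv γ) r))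
      (cross3 A A + cross3 T J) t := (hTd t).cross3' (had t)
  have hDd : HasDerivAt (darboux γ)
      (((dot3 T (cross3 A J) / ‖A‖ ^ 3) • A + c • T)
        + (‖A‖⁻¹ • (cross3 A A + cross3 T J)
            + (-(dot3 A J / ‖A‖) / ‖A‖ ^ 2) • cross3 T A)) t := by
    rw [hD]
    exact (hf.smul (hTd t)).add (hinv.smul hcr)
  have hkey := key_identity T A J (hTa t)
  rw [dot3_self_eq A] at hkey
  have hzero : (dot3 T (cross3 A J) / ‖A‖ ^ 3) • A
      + (‖A‖⁻¹ • (cross3 A A + cross3 T J)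
          + (-(dot3 A J / ‖A‖) / ‖A‖ ^ 2) • cross3 T A) = 0 := by
    rw [cross3_self, zero_add]
    have h1 : dot3 T (cross3 A J) / ‖A‖ ^ 3 = (‖A‖ ^ 3)⁻¹ * dot3 T (cross3 A J) := by
      rw [div_eq_mul_inv, mul_comm]
    have h2 : -(dot3 A J / ‖A‖) / ‖A‖ ^ 2 = (‖A‖ ^ 3)⁻¹ * -(dot3 A J) := by
      field_simp
    have h3 : (‖A‖:ℝ)⁻¹ = (‖A‖ ^ 3)⁻¹ * ‖A‖ ^ 2 := by
      field_simp
    rw [h1, h2, h3, mul_smul, mul_smul, mul_smul, ← smul_add, ← smul_add]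
    rw [show dot3 T (cross3 A J) • A + ((‖A‖ ^ 2 : ℝ) • cross3 T J + (-(dot3 A J)) • cross3 T A)
        = dot3 T (cross3 A J) • A - dot3 A J • cross3 T A + (‖A‖ ^ 2 : ℝ) • cross3 T J by
      rw [neg_smul]; abel]
    rw [hkey, smul_zero]
  have hDd' : HasDerivAt (darboux γ) (c • T) t := by
    convert hDd using 1
    rw [add_comm ((dot3 T (cross3 A J) / ‖A‖ ^ 3) • A) (c • T), add_assoc, hzero, add_zero]
  have hderiv : deriv (darboux γ) t = c • T := hDd'.deriv
  have hDt : darboux γ t = (dot3 T (cross3 A J) / ‖A‖ ^ 3) • T + ‖A‖⁻¹ • cross3 T A := by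
    rw [hD]
  refine ⟨?_, ⟨c, hderiv⟩, ?_, ?_, ?_⟩
  · rw [hDt, cross3_add_right, cross3_smul_right, cross3_smul_right, cross3_self, smul_zero, zero_add, cross3_cross3_self, hTa t, hdTT t, zero_smul, one_smul, zero_sub]
    simp [smul_eq_zero, hneT, neg_eq_zero, hinf t]
    exact hinf t
  · rw [hderiv, cross3_smul_left, cross3_self, smul_zero]
  · rw [hderiv]
    simp only [det3]
    rw [cross3_smul_right, dot3_smul_right, dot3_cross_right_self, mul_zero]
  · rw [hderiv, dot3_smul_left, hTa t, mul_zero]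
end

section
/- Let c > 0. There do not exist a C¹ map ν : ℝ → ℝ³ with ν(t+c) = −ν(t) and ν(t) × ν'(t) ≠ 0 for all t, together with a continuous map ξ : ℝ → ℝ³ with ‖ξ(t)‖ = 1, ξ(t+c) = −ξ(t), ξ(t)·ν(t) = 0 and ξ(t)·ν'(t) = 0 for all t. (This is the core of the proof that any Möbius developable admits at least one umbilical point: ν plays the role of an umbilic-free unit normal of a non-orientable flat strip and ξ its unit asymptotic direction field; since ξ must be a continuous scalar multiple a(t) of the c-periodic non-vanishing field ν(t) × ν'(t) with a(t+c) = −a(t), the coefficient a must vanish somewhere, contradicting ‖ξ‖ = 1.) -/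
open Real

/-!
The triple product `det(ξ, ν, ν')` is continuous and anti-periodic, so it vanishes at some `t₀`.
There the unit vector `ξ` is orthogonal to `ν`, `ν'` and `w = ν × ν'`. Orthogonality to `ν` and `ν'`
gives `ξ × w = 0`, and then Lagrange's identity `|ξ × w|² = |ξ|²|w|² - (ξ · w)²` forces `w = 0`.
-/

open Function Matrix

theorem cross3_eq_toLp_crossProduct (u v : E3) :
    cross3 u v = WithLp.toLp 2 (u.ofLp ⨯₃ v.ofLp) := by
  ext i; fin_cases i <;> simp [cross3, cross_apply]

theorem dot3_eq_dotProduct (u v : E3) : dot3 u v = u.ofLp ⬝ᵥ v.ofLp := by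
  simp [dot3, vec3_dotProduct]

theorem det3_eq_dotProduct_crossProduct (u v w : E3) :
    det3 u v w = u.ofLp ⬝ᵥ v.ofLp ⨯₃ w.ofLp := by
  simp [det3, dot3_eq_dotProduct, cross3_eq_toLp_crossProduct]

theorem cross_eq_zero_of_dotProduct_eq_zero {R : Type*} [CommRing R] [LinearOrder R]
    [IsStrictOrderedRing R] {x u v : Fin 3 → R} (hx : x ≠ 0) (hu : x ⬝ᵥ u = 0)
    (hv : x ⬝ᵥ v = 0) (huv : x ⬝ᵥ u ⨯₃ v = 0) : u ⨯₃ v = 0 := by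
  set w := u ⨯₃ v
  have hxw : x ⨯₃ w = 0 := by
    rw [cross_cross_eq_smul_sub_smul', hv, dotProduct_comm, hu, zero_smul, zero_smul, sub_zero]
  have hlagrange := cross_dot_cross x w x w
  rw [hxw, zero_dotProduct, huv, zero_mul, sub_zero, eq_comm, mul_eq_zero] at hlagrange
  exact dotProduct_self_eq_zero.1 (hlagrange.resolve_left (dotProduct_self_eq_zero.not.2 hx))

theorem cross3_eq_zero_of_det3_eq_zero {x u v : E3} (hx : x ≠ 0) (hu : dot3 x u = 0)
    (hv : dot3 x v = 0) (huv : det3 x u v = 0) : cross3 u v = 0 := by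
  rw [dot3_eq_dotProduct] at hu hv
  rw [det3_eq_dotProduct_crossProduct] at huv
  rw [cross3_eq_toLp_crossProduct, cross_eq_zero_of_dotProduct_eq_zero (by simpa using hx) hu hv huv]
  rfl

theorem Function.Antiperiodic.det3 {α : Type*} [Add α] {f g h : α → E3} {c : α}
    (hf : Antiperiodic f c) (hg : Antiperiodic g c) (hh : Antiperiodic h c) :
    Antiperiodic (fun t => det3 (f t) (g t) (h t)) c := by
  intro t
  simp only [hf t, hg t, hh t, det3_eq_dotProduct_crossProduct, WithLp.ofLp_neg, map_neg,
    LinearMap.neg_apply, neg_neg, neg_dotProduct]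

theorem Continuous.det3 {X : Type*} [TopologicalSpace X] {f g h : X → E3}
    (hf : Continuous f) (hg : Continuous g) (hh : Continuous h) :
    Continuous fun t => det3 (f t) (g t) (h t) := by
  simp only [_root_.det3, dot3, cross3, WithLp.equiv_symm_apply, PiLp.toLp_apply,
    cons_val_zero, cons_val_one, cons_val_two, head_cons, tail_cons]
  fun_prop

theorem Function.Antiperiodic.deriv {𝕜 F : Type*} [NontriviallyNormedField 𝕜] [NormedAddCommGroup F]
    [NormedSpace 𝕜 F] {f : 𝕜 → F} {c : 𝕜} (h : Antiperiodic f c) : Antiperiodic (deriv f) c := by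
  intro t
  rw [← deriv_comp_add_const, show (fun s => f (s + c)) = fun s => -f s from funext h, deriv.fun_neg]

theorem Function.Antiperiodic.exists_eq_zero {α β : Type*} [TopologicalSpace α]
    [PreconnectedSpace α] [Add α] [AddCommGroup β] [LinearOrder β] [IsOrderedAddMonoid β]
    [TopologicalSpace β] [OrderClosedTopology β] {f : α → β} {c : α} (hf : Continuous f)
    (h : Antiperiodic f c) : ∃ t, f t = 0 := by
  rcases le_total (f c) 0 with hneg | hpos
  · exact mem_range_of_exists_le_of_exists_ge hf ⟨c, hneg⟩ ⟨c + c, h c ▸ neg_nonneg.2 hneg⟩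
  · exact mem_range_of_exists_le_of_exists_ge hf ⟨c + c, h c ▸ neg_nonpos.2 hpos⟩ ⟨c, hpos⟩

theorem no_umbilic_free_moebius_normal_field_general (c : ℝ) :
    ¬ ∃ (ν ξ : ℝ → E3),
      ContDiff ℝ 1 ν ∧
      (∀ t, ν (t + c) = -ν t) ∧
      (∀ t, cross3 (ν t) (deriv ν t) ≠ 0) ∧
      Continuous ξ ∧
      (∀ t, ‖ξ t‖ = 1) ∧
      (∀ t, ξ (t + c) = -ξ t) ∧
      (∀ t, dot3 (ξ t) (ν t) = 0) ∧
      (∀ t, dot3 (ξ t) (deriv ν t) = 0) := by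
  rintro ⟨ν, ξ, hν, hν_anti, hν_cross, hξ_cont, hξ_norm, hξ_anti, hξν, hξν'⟩
  have hν'_anti : Antiperiodic (deriv ν) c := Antiperiodic.deriv hν_anti
  obtain ⟨t, ht⟩ := (Antiperiodic.det3 hξ_anti hν_anti hν'_anti).exists_eq_zero
    (hξ_cont.det3 hν.continuous (hν.continuous_deriv le_rfl))
  have hξ_ne : ξ t ≠ 0 := ne_zero_of_norm_ne_zero (by simp [hξ_norm t])
  exact hν_cross t (cross3_eq_zero_of_det3_eq_zero hξ_ne (hξν t) (hξν' t) ht)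

/-- Core of the proof that any Möbius developable has an umbilical point:
there is no umbilic-free anti-periodic unit normal field together with an
anti-periodic unit asymptotic direction field. -/
theorem no_umbilic_free_moebius_normal_field (c : ℝ) (hc : 0 < c) :
    ¬ ∃ (ν ξ : ℝ → E3),
      ContDiff ℝ 1 ν ∧
      (∀ t, ν (t + c) = -ν t) ∧
      (∀ t, cross3 (ν t) (deriv ν t) ≠ 0) ∧
      Continuous ξ ∧
      (∀ t, ‖ξ t‖ = 1) ∧
      (∀ t, ξ (t + c) = -ξ t) ∧
      (∀ t, dot3 (ξ t) (ν t) = 0) ∧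
      (∀ t, dot3 (ξ t) (deriv ν t) = 0) :=
  no_umbilic_free_moebius_normal_field_general c
end

section
/- Let γ : ℝ → ℝ³ be four times continuously differentiable near a point a with γ''(a) = 0, and set Δ(t) := det(γ'(t), γ''(t), γ'''(t)). Then Δ(a) = 0, Δ'(a) = 0, and Δ''(a) = det(γ'(a), γ'''(a), γ''''(a)). In particular, if t = a is a generic inflection point of γ, the normalized Darboux vector field extends smoothly across a (i.e. the order of torsion at a is at least 3) if and only if det(γ'(a), γ'''(a), γ''''(a)) = 0. -/
open Real

/-!
Differentiating `Δ = det(γ', γ'', γ''')` by the product rule, the terms `det(γ'', γ'', γ''')` and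
`det(γ', γ''', γ''')` vanish, so `Δ' = det(γ', γ'', γ'''')` near `a`; both `Δ` and `Δ'` vanish at
`a` because their middle column `γ''(a)` does. `Δ'` cannot be differentiated by the product rule
again, since `γ''''` is only continuous, but as `γ''(a) = 0` its difference quotient at `a` is
`det(γ'(t), (γ''(t) - γ''(a)) / (t - a), γ''''(t))`, which tends to `det(γ'(a), γ'''(a), γ''''(a))`.
-/

open Filter Topology

lemma det3_eq (u v w : E3) : det3 u v w =
    u 0 * (v 1 * w 2 - v 2 * w 1) + u 1 * (v 2 * w 0 - v 0 * w 2)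
      + u 2 * (v 0 * w 1 - v 1 * w 0) := by
  simp [det3, dot3, cross3]

lemma det3_self_left (u w : E3) : det3 u u w = 0 := by
  rw [det3_eq]; ring

lemma det3_self_right (u v : E3) : det3 u v v = 0 := by
  rw [det3_eq]; ring

lemma det3_zero_mid (u w : E3) : det3 u 0 w = 0 := by
  simp [det3_eq]

lemma det3_smul_mid (c : ℝ) (u v w : E3) : det3 u (c • v) w = c * det3 u v w := by
  simp only [det3_eq, PiLp.smul_apply, smul_eq_mul]; ring

lemma continuous_det3 : Continuous fun p : E3 × E3 × E3 => det3 p.1 p.2.1 p.2.2 := by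
  simp only [det3_eq]
  fun_prop

lemma hasDerivAt_det3 {f g h : ℝ → E3} {f' g' h' : E3} {t : ℝ}
    (hf : HasDerivAt f f' t) (hg : HasDerivAt g g' t) (hh : HasDerivAt h h' t) :
    HasDerivAt (fun s => det3 (f s) (g s) (h s))
      (det3 f' (g t) (h t) + det3 (f t) g' (h t) + det3 (f t) (g t) h') t := by
  have coord {φ : ℝ → E3} {φ' : E3} (hφ : HasDerivAt φ φ' t) (i : Fin 3) :
      HasDerivAt (fun s => φ s i) (φ' i) t :=
    ((EuclideanSpace.proj i).hasFDerivAt.comp_hasDerivAt t hφ :)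
  simp only [det3_eq]
  have minor (i j : Fin 3) :=
    ((coord hg i).mul (coord hh j)).sub ((coord hg j).mul (coord hh i))
  have expansion :=
    (((coord hf 0).mul (minor 1 2)).add ((coord hf 1).mul (minor 2 0))).add
      ((coord hf 2).mul (minor 0 1))
  exact expansion.congr_deriv (by simp only [Pi.mul_apply, Pi.sub_apply]; ring)

lemma hasDerivAt_det3_of_successive {f₁ f₂ f₃ : ℝ → E3} {v : E3} {t : ℝ}
    (h₁ : HasDerivAt f₁ (f₂ t) t) (h₂ : HasDerivAt f₂ (f₃ t) t) (h₃ : HasDerivAt f₃ v t) :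
    HasDerivAt (fun s => det3 (f₁ s) (f₂ s) (f₃ s)) (det3 (f₁ t) (f₂ t) v) t := by
  simpa only [det3_self_left, det3_self_right, zero_add] using hasDerivAt_det3 h₁ h₂ h₃

lemma hasDerivAt_det3_of_mid_eq_zero {f g h : ℝ → E3} {g' : E3} {a : ℝ}
    (hf : ContinuousAt f a) (hg : HasDerivAt g g' a) (hga : g a = 0) (hh : ContinuousAt h a) :
    HasDerivAt (fun s => det3 (f s) (g s) (h s)) (det3 (f a) g' (h a)) a := by
  have slope_eq : slope (fun s => det3 (f s) (g s) (h s)) a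
      = fun t => det3 (f t) (slope g a t) (h t) := by
    funext t
    simp only [slope_def_module, hga, det3_zero_mid, sub_zero, det3_smul_mid, smul_eq_mul]
  rw [hasDerivAt_iff_tendsto_slope, slope_eq]
  exact continuous_det3.continuousAt.tendsto.comp <|
    (hf.tendsto.mono_left nhdsWithin_le_nhds).prodMk_nhds
      (hg.tendsto_slope.prodMk_nhds (hh.tendsto.mono_left nhdsWithin_le_nhds))

lemma hasDerivAt_det3_deriv {γ : ℝ → E3} {t : ℝ} (hγ : ContDiffAt ℝ 4 γ t) :
    HasDerivAt (fun s => det3 (deriv γ s) (deriv (deriv γ) s) (deriv (deriv (deriv γ)) s))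
      (det3 (deriv γ t) (deriv (deriv γ) t) (deriv (deriv (deriv (deriv γ))) t)) t := by
  have h₁ : ContDiffAt ℝ 3 (deriv γ) t := hγ.derivWithin (by norm_num)
  have h₂ : ContDiffAt ℝ 2 (deriv (deriv γ)) t := h₁.derivWithin (by norm_num)
  have h₃ : ContDiffAt ℝ 1 (deriv (deriv (deriv γ))) t := h₂.derivWithin (by norm_num)
  exact hasDerivAt_det3_of_successive (h₁.hasStrictDerivAt (by norm_num)).hasDerivAt
    (h₂.hasStrictDerivAt (by norm_num)).hasDerivAt (h₃.hasStrictDerivAt (by norm_num)).hasDerivAt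

/-- At a point where γ'' vanishes, the torsion numerator Δ = det(γ',γ'',γ''') satisfies
Δ(a) = Δ'(a) = 0 and Δ''(a) = det(γ'(a), γ'''(a), γ''''(a)). -/
theorem torsion_numerator_derivatives_at_inflection (γ : ℝ → E3) (a : ℝ)
    (hγ : ∃ s ∈ nhds a, ContDiffOn ℝ 4 γ s)
    (hinf : deriv (deriv γ) a = 0) :
    (fun t => det3 (deriv γ t) (deriv (deriv γ) t) (deriv (deriv (deriv γ)) t)) a = 0 ∧
    deriv (fun t => det3 (deriv γ t) (deriv (deriv γ) t) (deriv (deriv (deriv γ)) t)) a = 0 ∧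
    deriv (deriv (fun t => det3 (deriv γ t) (deriv (deriv γ) t) (deriv (deriv (deriv γ)) t))) a
      = det3 (deriv γ a) (deriv (deriv (deriv γ)) a) (deriv (deriv (deriv (deriv γ))) a) := by
  obtain ⟨s, hs, hγs⟩ := hγ
  have hγ_near : ∀ᶠ t in 𝓝 a, ContDiffAt ℝ 4 γ t := by
    filter_upwards [eventually_mem_nhds_iff.mpr hs] with t ht using hγs.contDiffAt ht
  have hγa : ContDiffAt ℝ 4 γ a := hγ_near.self_of_nhds
  have hΔ' : deriv (fun t => det3 (deriv γ t) (deriv (deriv γ) t) (deriv (deriv (deriv γ)) t))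
      =ᶠ[𝓝 a] fun t =>
        det3 (deriv γ t) (deriv (deriv γ) t) (deriv (deriv (deriv (deriv γ))) t) := by
    filter_upwards [hγ_near] with t ht using (hasDerivAt_det3_deriv ht).deriv
  refine ⟨by simp only [hinf, det3_zero_mid], ?_, ?_⟩
  · rw [hΔ'.eq_of_nhds, hinf, det3_zero_mid]
  · have h₁ : ContDiffAt ℝ 3 (deriv γ) a := hγa.derivWithin (by norm_num)
    have h₂ : ContDiffAt ℝ 2 (deriv (deriv γ)) a := h₁.derivWithin (by norm_num)
    have h₄ : ContDiffAt ℝ 0 (deriv (deriv (deriv (deriv γ)))) a :=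
      (h₂.derivWithin (m := 1) (by norm_num)).derivWithin (by norm_num)
    rw [hΔ'.deriv_eq]
    exact (hasDerivAt_det3_of_mid_eq_zero h₁.continuousAt
      (h₂.hasStrictDerivAt (by norm_num)).hasDerivAt hinf h₄.continuousAt).deriv
end

section
/- Let γ : ℝ → ℝ³ be a real-analytic curve with γ'(t) ≠ 0 for all t. Suppose that near t = a one has γ'(t) × γ''(t) = (t−a)^N · c(t) with c real-analytic and c(a) ≠ 0 for some integer N ≥ 1, and det(γ'(t), γ''(t), γ'''(t)) = (t−a)^M · T(t) with T real-analytic for some integer M ≥ 3N. For t ≠ a let D(t) := (det(γ'(t), γ''(t), γ'''(t))·‖γ'(t)‖² / ‖γ'(t) × γ''(t)‖³)·γ'(t) + (γ'(t) × γ''(t))/‖γ'(t) × γ''(t)‖ be the normalized Darboux vector field. Then the map t ↦ sgn(t−a)^N · D(t), defined for t ≠ a near a, extends to a real-analytic vector field on a neighborhood of a. In particular, when N is odd (so sgn(t−a)^N = sgn(t−a)), D itself changes sign across the inflection point while the extended field is smooth, producing a non-orientable (Möbius) rectifying developable. -/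
open Real

/-! On `U` the hypotheses give `γ' × γ'' = (t - a)^N • c` and `det = (t - a)^M T`, so
`‖γ' × γ''‖ = |t - a|^N ‖c‖`. Since `sgn(t - a)^N (t - a)^N = |t - a|^N`, multiplying `D` by
`sgn(t - a)^N` cancels every power of `t - a` in the denominators, leaving
`((t - a)^(M - 3N) T ‖γ'‖² / ‖c‖³) • γ' + ‖c‖⁻¹ • c`, which is analytic wherever `c ≠ 0`,
hence near `a`. -/

open Filter Topology ContDiff

section
variable {F E : Type*} [NormedAddCommGroup F] [NormedSpace ℝ F]
  [NormedAddCommGroup E] [InnerProductSpace ℝ E] [CompleteSpace E] {f : F → E} {x : F}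

theorem AnalyticAt.norm (hf : AnalyticAt ℝ f x) (h0 : f x ≠ 0) :
    AnalyticAt ℝ (fun y => ‖f y‖) x :=
  (hf.contDiffAt (n := ω)).norm ℝ h0 |>.analyticAt

theorem AnalyticAt.norm_sq (hf : AnalyticAt ℝ f x) : AnalyticAt ℝ (fun y => ‖f y‖ ^ 2) x :=
  ((contDiff_norm_sq ℝ).contDiffAt.comp x (hf.contDiffAt (n := ω))).analyticAt

end

theorem Real.sign_mul_self_eq_abs (s : ℝ) : Real.sign s * s = |s| := by
  rcases lt_trichotomy s 0 with h | rfl | h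
  · rw [Real.sign_of_neg h, abs_of_neg h, neg_one_mul]
  · simp
  · rw [Real.sign_of_pos h, abs_of_pos h, one_mul]

theorem sign_pow_smul_darboux_rescale {V : Type*} [NormedAddCommGroup V] [NormedSpace ℝ V]
    {s : ℝ} (hs : s ≠ 0) (N K : ℕ) (τ : ℝ) (v w : V) :
    Real.sign s ^ N • ((s ^ (3 * N + K) * τ / ‖s ^ N • w‖ ^ 3) • v + ‖s ^ N • w‖⁻¹ • s ^ N • w)
      = (s ^ K * τ / ‖w‖ ^ 3) • v + ‖w‖⁻¹ • w := by
  have hsign : Real.sign s ^ N * s ^ N = |s| ^ N := by rw [← mul_pow, Real.sign_mul_self_eq_abs]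
  have habs : |s| ^ N ≠ 0 := pow_ne_zero _ (abs_ne_zero.2 hs)
  have hsq : (s ^ N) ^ 2 = (|s| ^ N) ^ 2 := by rw [pow_abs, sq_abs]
  rw [norm_smul, Real.norm_eq_abs, abs_pow, smul_add, smul_smul, smul_smul, smul_smul]
  congr 2
  · calc Real.sign s ^ N * (s ^ (3 * N + K) * τ / (|s| ^ N * ‖w‖) ^ 3)
        = Real.sign s ^ N * s ^ N * (s ^ N) ^ 2 * (s ^ K * τ) / ((|s| ^ N) ^ 3 * ‖w‖ ^ 3) := by
          ring
      _ = (|s| ^ N) ^ 3 * (s ^ K * τ) / ((|s| ^ N) ^ 3 * ‖w‖ ^ 3) := by rw [hsign, hsq]; ring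
      _ = s ^ K * τ / ‖w‖ ^ 3 := mul_div_mul_left _ _ (pow_ne_zero 3 habs)
  · rw [mul_right_comm, hsign, mul_inv, ← mul_assoc, mul_inv_cancel₀ habs, one_mul]

theorem darboux_extends_analytically_across_inflection_general (γ : ℝ → E3) (a : ℝ)
    (N M : ℕ) (hM : 3 * N ≤ M)
    (hγ : ∀ t, AnalyticAt ℝ γ t)
    (c : ℝ → E3) (T : ℝ → ℝ) (U : Set ℝ) (hU : U ∈ nhds a)
    (hc : ∀ t ∈ U, AnalyticAt ℝ c t) (hc0 : c a ≠ 0)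
    (hw : ∀ t ∈ U, cross3 (deriv γ t) (deriv (deriv γ) t) = (t - a) ^ N • c t)
    (hT : ∀ t ∈ U, AnalyticAt ℝ T t)
    (hΔ : ∀ t ∈ U,
      det3 (deriv γ t) (deriv (deriv γ) t) (deriv (deriv (deriv γ)) t) = (t - a) ^ M * T t) :
    ∃ (E : ℝ → E3) (V : Set ℝ), V ∈ nhds a ∧ (∀ t ∈ V, AnalyticAt ℝ E t) ∧
      ∀ t ∈ V, t ≠ a →
        E t = (Real.sign (t - a)) ^ N •
          ((det3 (deriv γ t) (deriv (deriv γ) t) (deriv (deriv (deriv γ)) t) * ‖deriv γ t‖ ^ 2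
              / ‖cross3 (deriv γ t) (deriv (deriv γ) t)‖ ^ 3) • deriv γ t
            + ‖cross3 (deriv γ t) (deriv (deriv γ) t)‖⁻¹ •
                cross3 (deriv γ t) (deriv (deriv γ) t)) := by
  obtain ⟨K, rfl⟩ := Nat.exists_eq_add_of_le hM
  have hc_ne : ∀ᶠ t in 𝓝 a, c t ≠ 0 :=
    (hc a (mem_of_mem_nhds hU)).continuousAt.eventually_ne hc0
  refine ⟨fun t => ((t - a) ^ K * (T t * ‖deriv γ t‖ ^ 2) / ‖c t‖ ^ 3) • deriv γ t
      + ‖c t‖⁻¹ • c t, U ∩ {t | c t ≠ 0}, inter_mem hU hc_ne, ?_, ?_⟩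
  · rintro t ⟨htU, hct⟩
    have hγ' : AnalyticAt ℝ (deriv γ) t := (hγ t).deriv
    have hnorm : AnalyticAt ℝ (fun s => ‖c s‖) t := (hc t htU).norm hct
    have hnorm_ne : ‖c t‖ ≠ 0 := norm_ne_zero_iff.2 hct
    have hcoef : AnalyticAt ℝ
        (fun s => (s - a) ^ K * (T s * ‖deriv γ s‖ ^ 2) / ‖c s‖ ^ 3) t :=
      (((analyticAt_id.sub analyticAt_const).pow K).mul ((hT t htU).mul hγ'.norm_sq)).div
        (hnorm.pow 3) (pow_ne_zero 3 hnorm_ne)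
    exact (hcoef.smul hγ').add ((hnorm.inv hnorm_ne).smul (hc t htU))
  · rintro t ⟨htU, -⟩ hta
    rw [hw t htU, hΔ t htU, mul_assoc]
    exact (sign_pow_smul_darboux_rescale (sub_ne_zero.2 hta) N K _ _ _).symm

/-- Randrup–Rogen: if the order N of the inflection point at t = a and the order M of
torsion satisfy M ≥ 3N, then (sgn(t-a))^N · D(t) extends real-analytically across a,
where D is the normalized Darboux vector field. -/
theorem darboux_extends_analytically_across_inflection (γ : ℝ → E3) (a : ℝ)
    (N M : ℕ) (hN : 1 ≤ N) (hM : 3 * N ≤ M)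
    (hγ : ∀ t, AnalyticAt ℝ γ t)
    (hreg : ∀ t, deriv γ t ≠ 0)
    (c : ℝ → E3) (T : ℝ → ℝ) (U : Set ℝ) (hU : U ∈ nhds a)
    (hc : ∀ t ∈ U, AnalyticAt ℝ c t) (hc0 : c a ≠ 0)
    (hw : ∀ t ∈ U, cross3 (deriv γ t) (deriv (deriv γ) t) = (t - a) ^ N • c t)
    (hT : ∀ t ∈ U, AnalyticAt ℝ T t)
    (hΔ : ∀ t ∈ U,
      det3 (deriv γ t) (deriv (deriv γ) t) (deriv (deriv (deriv γ)) t) = (t - a) ^ M * T t) :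
    ∃ (E : ℝ → E3) (V : Set ℝ), V ∈ nhds a ∧ (∀ t ∈ V, AnalyticAt ℝ E t) ∧
      ∀ t ∈ V, t ≠ a →
        E t = (Real.sign (t - a)) ^ N •
          ((det3 (deriv γ t) (deriv (deriv γ) t) (deriv (deriv (deriv γ)) t) * ‖deriv γ t‖ ^ 2
              / ‖cross3 (deriv γ t) (deriv (deriv γ) t)‖ ^ 3) • deriv γ t
            + ‖cross3 (deriv γ t) (deriv (deriv γ) t)‖⁻¹ •
                cross3 (deriv γ t) (deriv (deriv γ) t)) :=
  darboux_extends_analytically_across_inflection_general γ a N M hM hγ c T U hU hc hc0 hw hT hΔ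
end

section
/- Let γ̂ : ℝ → ℝ³ be the real-analytic curve γ̂(s) = (1/(1+s²+s⁴+s⁶+s⁸+s¹⁰))·(s+s³+s⁵+s⁷+s⁹, s⁵+s⁷+s⁹, s¹⁰). Set w(s) := γ̂'(s) × γ̂''(s) and Δ(s) := det(γ̂'(s), γ̂''(s), γ̂'''(s)). Then γ̂'(0) ≠ 0, w(0) = w'(0) = w''(0) = 0 and w'''(0) ≠ 0 (so s = 0 is a non-generic inflection point of order N = 3), while Δ^{(k)}(0) = 0 for 0 ≤ k ≤ 9 and Δ^{(10)}(0) ≠ 0 (so the order of torsion at s = 0 is M = 10). In particular M ≥ 3N, so the normalized Darboux vector field extends smoothly across s = 0 with N odd, and the curve carries a rectifying Möbius developable whose centerline has a non-generic inflection point. -/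
/-!
The coordinates of `kurono` are `s`, `s ^ 5` and `s ^ 10` times smooth functions equal to `1` at
`0`. Writing a function as `s ^ n • g s` with `g` smooth is stable under differentiation (the
exponent drops by one and the leading coefficient gets multiplied by `n`), sums and products, and
such a function has vanishing derivatives of order `< n` at `0` and `n`-th derivative `n! • g 0`.
Tracking exponents and leading coefficients through the cofactor expansions gives
`γ' × γ'' = s ^ 3 • ((0, 0, 20) + O(s))` and
`det (γ', γ'', γ''') = s ^ 10 • (9000 + O(s))`.
-/

open Real

/-- The curve of Example 1.11, expressed near its point at infinity. -/
noncomputable def kurono (s : ℝ) : E3 :=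
  (WithLp.equiv 2 (Fin 3 → ℝ)).symm
    ![(s + s ^ 3 + s ^ 5 + s ^ 7 + s ^ 9) /
        (1 + s ^ 2 + s ^ 4 + s ^ 6 + s ^ 8 + s ^ 10),
      (s ^ 5 + s ^ 7 + s ^ 9) / (1 + s ^ 2 + s ^ 4 + s ^ 6 + s ^ 8 + s ^ 10),
      s ^ 10 / (1 + s ^ 2 + s ^ 4 + s ^ 6 + s ^ 8 + s ^ 10)]

open scoped ContDiff

/-- `f s = s ^ n • g s` with `g` smooth and `g 0 = c`. As `c` may vanish, this only says that `f`
vanishes to order at least `n` at `0`. -/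
def HasLeadingTerm {E : Type*} [NormedAddCommGroup E] [NormedSpace ℝ E]
    (f : ℝ → E) (n : ℕ) (c : E) : Prop :=
  ∃ g : ℝ → E, ContDiff ℝ ∞ g ∧ g 0 = c ∧ ∀ s, f s = s ^ n • g s

namespace HasLeadingTerm

section NormedSpace

variable {E : Type*} [NormedAddCommGroup E] [NormedSpace ℝ E]
  {f g : ℝ → E} {n : ℕ} {c d : E}

theorem of_contDiff (hf : ContDiff ℝ ∞ f) : HasLeadingTerm f 0 (f 0) :=
  ⟨f, hf, rfl, fun s => by simp⟩

theorem contDiff (h : HasLeadingTerm f n c) : ContDiff ℝ ∞ f := by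
  obtain ⟨g, hg, -, hfg⟩ := h
  rw [funext hfg]
  fun_prop

theorem apply_zero (h : HasLeadingTerm f 0 c) : f 0 = c := by
  obtain ⟨g, -, hg0, hfg⟩ := h
  simp [hfg, hg0]

theorem apply_zero_of_pos (h : HasLeadingTerm f n c) (hn : 0 < n) : f 0 = 0 := by
  obtain ⟨g, -, -, hfg⟩ := h
  simp [hfg, zero_pow hn.ne']

theorem mono (h : HasLeadingTerm f n c) {m : ℕ} (hmn : m < n) : HasLeadingTerm f m 0 := by
  obtain ⟨g, hg, -, hfg⟩ := h
  refine ⟨fun s => s ^ (n - m) • g s, by fun_prop, by simp [Nat.sub_ne_zero_of_lt hmn],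
    fun s => ?_⟩
  rw [hfg, smul_smul, ← pow_add, Nat.add_sub_cancel' hmn.le]

theorem add (hf : HasLeadingTerm f n c) (hg : HasLeadingTerm g n d) :
    HasLeadingTerm (fun s => f s + g s) n (c + d) := by
  obtain ⟨u, hu, hu0, hfu⟩ := hf
  obtain ⟨v, hv, hv0, hgv⟩ := hg
  exact ⟨u + v, hu.add hv, by simp [hu0, hv0], fun s => by simp [hfu, hgv]⟩

theorem sub (hf : HasLeadingTerm f n c) (hg : HasLeadingTerm g n d) :
    HasLeadingTerm (fun s => f s - g s) n (c - d) := by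
  obtain ⟨u, hu, hu0, hfu⟩ := hf
  obtain ⟨v, hv, hv0, hgv⟩ := hg
  exact ⟨u - v, hu.sub hv, by simp [hu0, hv0], fun s => by simp [hfu, hgv, smul_sub]⟩

theorem deriv (h : HasLeadingTerm f (n + 1) c) : HasLeadingTerm (deriv f) n ((n + 1) • c) := by
  obtain ⟨g, hg, hg0, hfg⟩ := h
  refine ⟨fun s => (n + 1) • g s + s • _root_.deriv g s, by fun_prop, by simp [hg0],
    fun s => ?_⟩
  have hd : HasDerivAt (fun s => s ^ (n + 1) • g s) _ s :=
    (hasDerivAt_pow (n + 1) s).smul (hg.differentiable (by simp) s).hasDerivAt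
  rw [funext hfg, hd.deriv, Nat.add_sub_cancel]
  module

theorem iteratedDeriv {k : ℕ} (h : HasLeadingTerm f (n + k) c) :
    HasLeadingTerm (iteratedDeriv k f) n ((n + k).descFactorial k • c) := by
  induction k generalizing f c with
  | zero => simpa using h
  | succ k ih =>
    rw [iteratedDeriv_succ', ← add_assoc, Nat.succ_descFactorial_succ, mul_comm, mul_smul]
    exact ih (HasLeadingTerm.deriv h)

theorem iteratedDeriv_of_le (h : HasLeadingTerm f n c) {k : ℕ} (hk : k ≤ n) :
    HasLeadingTerm (_root_.iteratedDeriv k f) (n - k) (n.descFactorial k • c) := by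
  have h' := HasLeadingTerm.iteratedDeriv (n := n - k) (by rwa [Nat.sub_add_cancel hk])
  rwa [Nat.sub_add_cancel hk] at h'

theorem of_contDiff_iteratedDeriv (hf : ContDiff ℝ ∞ f) (k : ℕ) :
    HasLeadingTerm (_root_.iteratedDeriv k f) 0 (_root_.iteratedDeriv k f 0) :=
  of_contDiff (by rw [iteratedDeriv_eq_iterate]; exact hf.iterate_deriv k)

theorem iteratedDeriv_eq_zero (h : HasLeadingTerm f n c) {k : ℕ} (hk : k < n) :
    _root_.iteratedDeriv k f 0 = 0 :=
  (h.iteratedDeriv_of_le hk.le).apply_zero_of_pos (by omega)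

theorem iteratedDeriv_self (h : HasLeadingTerm f n c) :
    _root_.iteratedDeriv n f 0 = n.factorial • c := by
  simpa [Nat.descFactorial_self] using
    (HasLeadingTerm.iteratedDeriv (n := 0) (by rwa [zero_add])).apply_zero

end NormedSpace

theorem mul {f g : ℝ → ℝ} {m n : ℕ} {a b : ℝ}
    (hf : HasLeadingTerm f m a) (hg : HasLeadingTerm g n b) :
    HasLeadingTerm (fun s => f s * g s) (m + n) (a * b) := by
  obtain ⟨u, hu, hu0, hfu⟩ := hf
  obtain ⟨v, hv, hv0, hgv⟩ := hg
  exact ⟨u * v, hu.mul hv, by simp [hu0, hv0], fun s => by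
    simp only [hfu, hgv, Pi.mul_apply, smul_eq_mul]; ring⟩

theorem of_apply {ι : Type*} [Fintype ι] {f : ℝ → EuclideanSpace ℝ ι} {n : ℕ}
    {c : EuclideanSpace ℝ ι} (h : ∀ i, HasLeadingTerm (fun s => f s i) n (c i)) :
    HasLeadingTerm f n c := by
  choose g hg hg0 hfg using h
  refine ⟨fun s => WithLp.toLp 2 fun i => g i s, (contDiff_piLp 2).2 hg, ?_, fun s => ?_⟩
  · ext i; simp [hg0]
  · ext i; simp [hfg]

end HasLeadingTerm

section EuclideanSpace

variable {ι : Type*} [Fintype ι] {f : ℝ → EuclideanSpace ℝ ι}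

theorem deriv_euclidean_apply {s : ℝ} (hf : DifferentiableAt ℝ f s) (i : ι) :
    deriv f s i = deriv (fun t => f t i) s :=
  ((PiLp.hasFDerivAt_apply 2 (f s) i).comp_hasDerivAt s hf.hasDerivAt).deriv.symm

theorem iteratedDeriv_euclidean_apply (hf : ContDiff ℝ ∞ f) (k : ℕ) (s : ℝ) (i : ι) :
    iteratedDeriv k f s i = iteratedDeriv k (fun t => f t i) s := by
  induction k generalizing f with
  | zero => simp
  | succ k ih =>
    have hderiv : (fun t => deriv f t i) = deriv (fun t => f t i) :=
      funext fun t => deriv_euclidean_apply (hf.differentiable (by simp) t) i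
    rw [iteratedDeriv_succ', iteratedDeriv_succ', ih (contDiff_infty_iff_deriv.1 hf).2, hderiv]

end EuclideanSpace

section CurveOfType

variable {γ : ℝ → E3} {a b c : ℝ} {l m n : ℕ}

theorem contDiff_of_hasLeadingTerm_apply (hx : HasLeadingTerm (fun s => γ s 0) l a)
    (hy : HasLeadingTerm (fun s => γ s 1) m b) (hz : HasLeadingTerm (fun s => γ s 2) n c) :
    ContDiff ℝ ∞ γ :=
  (contDiff_piLp 2).2 fun i => by
    fin_cases i
    exacts [hx.contDiff, hy.contDiff, hz.contDiff]

theorem hasLeadingTerm_cross_deriv (hx : HasLeadingTerm (fun s => γ s 0) 1 a)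
    (hy : HasLeadingTerm (fun s => γ s 1) 5 b) (hz : HasLeadingTerm (fun s => γ s 2) 10 c) :
    HasLeadingTerm (fun s => cross3 (deriv γ s) (deriv (deriv γ) s)) 3
      !₂[0, 0, 20 * a * b] := by
  have hγ := contDiff_of_hasLeadingTerm_apply hx hy hz
  have x1 := hx.iteratedDeriv_of_le (k := 1) (by norm_num)
  have x2 := HasLeadingTerm.of_contDiff_iteratedDeriv hx.contDiff 2
  have y1 := hy.iteratedDeriv_of_le (k := 1) (by norm_num)
  have y2 := hy.iteratedDeriv_of_le (k := 2) (by norm_num)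
  have z1 := hz.iteratedDeriv_of_le (k := 1) (by norm_num)
  have z2 := hz.iteratedDeriv_of_le (k := 2) (by norm_num)
  rw [show deriv (deriv γ) = iteratedDeriv 2 γ by
      simp only [iteratedDeriv_succ, iteratedDeriv_zero],
    ← iteratedDeriv_one]
  refine HasLeadingTerm.of_apply fun i => ?_
  fin_cases i
  · convert ((y1.mul z2).sub (z1.mul y2)).mono (m := 3) (by norm_num) using 1
    · funext s; simp [cross3, iteratedDeriv_euclidean_apply hγ, -iteratedDeriv_one]
    · simp
  · convert (((z1.mul x2).mono (m := 8) (by norm_num)).sub (x1.mul z2)).mono (m := 3)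
      (by norm_num) using 1
    · funext s; simp [cross3, iteratedDeriv_euclidean_apply hγ, -iteratedDeriv_one]
    · simp
  · convert (x1.mul y2).sub ((y1.mul x2).mono (m := 3) (by norm_num)) using 1
    · funext s; simp [cross3, iteratedDeriv_euclidean_apply hγ, -iteratedDeriv_one]
    · simp [Nat.descFactorial]; ring

theorem hasLeadingTerm_det_deriv (hx : HasLeadingTerm (fun s => γ s 0) 1 a)
    (hy : HasLeadingTerm (fun s => γ s 1) 5 b) (hz : HasLeadingTerm (fun s => γ s 2) 10 c) :
    HasLeadingTerm (fun s => det3 (deriv γ s) (deriv (deriv γ) s) (deriv (deriv (deriv γ)) s)) 10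
      (9000 * a * b * c) := by
  have hγ := contDiff_of_hasLeadingTerm_apply hx hy hz
  have x1 := hx.iteratedDeriv_of_le (k := 1) (by norm_num)
  have x2 := HasLeadingTerm.of_contDiff_iteratedDeriv hx.contDiff 2
  have x3 := HasLeadingTerm.of_contDiff_iteratedDeriv hx.contDiff 3
  have y1 := hy.iteratedDeriv_of_le (k := 1) (by norm_num)
  have y2 := hy.iteratedDeriv_of_le (k := 2) (by norm_num)
  have y3 := hy.iteratedDeriv_of_le (k := 3) (by norm_num)
  have z1 := hz.iteratedDeriv_of_le (k := 1) (by norm_num)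
  have z2 := hz.iteratedDeriv_of_le (k := 2) (by norm_num)
  have z3 := hz.iteratedDeriv_of_le (k := 3) (by norm_num)
  -- 9000 = 20 * 720 - 90 * 60 is the Wronskian of `s ^ 5` and `s ^ 10`; the other two
  -- cofactor terms vanish to order 11.
  have t1 := x1.mul ((y2.mul z3).sub (z2.mul y3))
  have t2 := (y1.mul (((z2.mul x3).mono (m := 7) (by norm_num)).sub (x2.mul z3))).mono
    (m := 10) (by norm_num)
  have t3 := (z1.mul ((x2.mul y3).sub ((y2.mul x3).mono (m := 2) (by norm_num)))).mono
    (m := 10) (by norm_num)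
  rw [show deriv (deriv (deriv γ)) = iteratedDeriv 3 γ by
      simp only [iteratedDeriv_succ, iteratedDeriv_zero],
    show deriv (deriv γ) = iteratedDeriv 2 γ by
      simp only [iteratedDeriv_succ, iteratedDeriv_zero],
    ← iteratedDeriv_one]
  convert (t1.add t2).add t3 using 1
  · funext s; simp [det3, dot3, cross3, iteratedDeriv_euclidean_apply hγ, -iteratedDeriv_one]
  · simp [Nat.descFactorial]; ring

theorem deriv_ne_zero_of_hasLeadingTerm_apply (hγ : DifferentiableAt ℝ γ 0)
    (hx : HasLeadingTerm (fun s => γ s 0) 1 a) (ha : a ≠ 0) : deriv γ 0 ≠ 0 := by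
  intro h
  have h0 := hx.iteratedDeriv_self
  rw [iteratedDeriv_one, ← deriv_euclidean_apply hγ, h] at h0
  simp [ha.symm] at h0

end CurveOfType

theorem kurono_denom_ne_zero (s : ℝ) : 1 + s ^ 2 + s ^ 4 + s ^ 6 + s ^ 8 + s ^ 10 ≠ 0 := by
  positivity

theorem hasLeadingTerm_kurono_apply_zero : HasLeadingTerm (fun s => kurono s 0) 1 1 :=
  ⟨fun s => (1 + s ^ 2 + s ^ 4 + s ^ 6 + s ^ 8) / (1 + s ^ 2 + s ^ 4 + s ^ 6 + s ^ 8 + s ^ 10),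
    by fun_prop (disch := exact kurono_denom_ne_zero), by norm_num,
    fun s => by simp [kurono]; ring⟩

theorem hasLeadingTerm_kurono_apply_one : HasLeadingTerm (fun s => kurono s 1) 5 1 :=
  ⟨fun s => (1 + s ^ 2 + s ^ 4) / (1 + s ^ 2 + s ^ 4 + s ^ 6 + s ^ 8 + s ^ 10),
    by fun_prop (disch := exact kurono_denom_ne_zero), by norm_num,
    fun s => by simp [kurono]; ring⟩

theorem hasLeadingTerm_kurono_apply_two : HasLeadingTerm (fun s => kurono s 2) 10 1 :=
  ⟨fun s => 1 / (1 + s ^ 2 + s ^ 4 + s ^ 6 + s ^ 8 + s ^ 10),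
    by fun_prop (disch := exact kurono_denom_ne_zero), by norm_num,
    fun s => by simp [kurono]; ring⟩

/-- At s = 0 the curve has a non-generic inflection point of order N = 3 with order of
torsion M = 10 ≥ 3N. -/
theorem kurono_nongeneric_inflection_and_torsion_order :
    let w : ℝ → E3 := fun s => cross3 (deriv kurono s) (deriv (deriv kurono) s)
    let Δ : ℝ → ℝ := fun s =>
      det3 (deriv kurono s) (deriv (deriv kurono) s) (deriv (deriv (deriv kurono)) s)
    deriv kurono 0 ≠ 0 ∧
    w 0 = 0 ∧ deriv w 0 = 0 ∧ iteratedDeriv 2 w 0 = 0 ∧ iteratedDeriv 3 w 0 ≠ 0 ∧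
    (∀ k ≤ 9, iteratedDeriv k Δ 0 = 0) ∧
    iteratedDeriv 10 Δ 0 ≠ 0 := by
  intro w Δ
  have hx := hasLeadingTerm_kurono_apply_zero
  have hy := hasLeadingTerm_kurono_apply_one
  have hz := hasLeadingTerm_kurono_apply_two
  have hw : HasLeadingTerm w 3 _ := hasLeadingTerm_cross_deriv hx hy hz
  have hΔ : HasLeadingTerm Δ 10 _ := hasLeadingTerm_det_deriv hx hy hz
  have hγ := (contDiff_of_hasLeadingTerm_apply hx hy hz).differentiable (by simp) 0
  refine ⟨deriv_ne_zero_of_hasLeadingTerm_apply hγ hx one_ne_zero,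
    hw.apply_zero_of_pos (by norm_num), ?_, hw.iteratedDeriv_eq_zero (by norm_num), ?_,
    fun k hk => hΔ.iteratedDeriv_eq_zero (by omega), ?_⟩
  · simpa using hw.iteratedDeriv_eq_zero (k := 1) (by norm_num)
  · rw [hw.iteratedDeriv_self]
    intro h
    simpa [Nat.factorial] using congrArg (· 2) h
  · rw [hΔ.iteratedDeriv_self]
    norm_num [Nat.factorial]
end
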